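/- Let τ : I* → O be a computation tree such that reps(t) divides rep(τ(t)) for every t ∈ I*. Then the symmetric completion τ' of τ has the symmetry property, i.e., τ'(rot(t,i)) = rot(τ'(t),i) for every t ∈ I* and 0 ≤ i < n; moreover, τ'(t) = τ(t) for every normalized t ∈ I*. -/
import Mathlib


def rotL {AP : Type} [DecidableEq AP] (n : ℕ) (x : Finset (AP × ZMod n)) (k : ℤ) :
    Finset (AP × ZMod n) :=
  x.image (fun pj => (pj.1, pj.2 + (k : ZMod n)))

def rotW {AP : Type} [DecidableEq AP] (n : ℕ) (t : List (Finset (AP × ZMod n))) (k : ℤ) :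
    List (Finset (AP × ZMod n)) :=
  t.map (fun x => rotL n x k)

/-- `η(t) = min_{0 ≤ i < n} rot(t,i)` with respect to the lexicographic order on words. -/
def eta {AP : Type} [DecidableEq AP] (n : ℕ) [NeZero n]
    [LinearOrder (Finset (AP × ZMod n))] (t : List (Finset (AP × ZMod n))) :
    List (Finset (AP × ZMod n)) :=
  ((Finset.range n).image (fun i : ℕ => rotW n t ((i : ℤ)))).min'
    ((Finset.nonempty_range_iff.mpr (NeZero.ne n)).image _)

/-- A word is normalized if it equals the minimum of its rotations. -/
def normalized {AP : Type} [DecidableEq AP] (n : ℕ) [NeZero n]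
    [LinearOrder (Finset (AP × ZMod n))] (t : List (Finset (AP × ZMod n))) : Prop :=
  eta n t = t

/-- The least `i ∈ {0,…,n−1}` with `rot(s,i) = t`. -/
noncomputable def leastRotIdx {AP : Type} [DecidableEq AP] (n : ℕ)
    (s t : List (Finset (AP × ZMod n))) : ℕ := by
  classical
  exact if h : ∃ i : ℕ, i < n ∧ rotW n s ((i : ℤ)) = t then Nat.find h else 0

/-- The symmetric completion `τ'` of `τ`:
`τ'(t) = rot(τ(η(t)), i_t)` where `i_t` is the least `i ∈ {0,…,n−1}` with `rot(η(t),i) = t`. -/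
noncomputable def symComp {AP_I AP_O : Type} [DecidableEq AP_I] [DecidableEq AP_O]
    (n : ℕ) [NeZero n] [LinearOrder (Finset (AP_I × ZMod n))]
    (τ : List (Finset (AP_I × ZMod n)) → Finset (AP_O × ZMod n)) :
    List (Finset (AP_I × ZMod n)) → Finset (AP_O × ZMod n) :=
  fun t => rotL n (τ (eta n t)) ((leastRotIdx n (eta n t) t : ℤ))


def rep {AP : Type} [DecidableEq AP] (n : ℕ) (x : Finset (AP × ZMod n)) : ℕ :=
  ((Finset.range n).filter (fun j : ℕ => rotL n x ((j : ℤ)) = x)).card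

def reps {AP : Type} [DecidableEq AP] (n : ℕ) (t : List (Finset (AP × ZMod n))) : ℕ :=
  t.foldl (fun a x => Nat.gcd a (rep n x)) n


set_option linter.unusedSectionVars false

section Aux1
variable {AP : Type} [DecidableEq AP] {n : ℕ}

variable {AP : Type} [DecidableEq AP] {n : ℕ}

lemma rotL_congr (x : Finset (AP × ZMod n)) {a b : ℤ} (h : ((a : ZMod n)) = (b : ZMod n)) :
    rotL n x a = rotL n x b := by unfold rotL; rw [h]

lemma rotL_zero (x : Finset (AP × ZMod n)) : rotL n x 0 = x := by
  unfold rotL; simp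

lemma rotL_add (x : Finset (AP × ZMod n)) (a b : ℤ) :
    rotL n (rotL n x a) b = rotL n x (a + b) := by
  unfold rotL
  rw [Finset.image_image]
  apply Finset.image_congr
  intro pj _
  simp [Function.comp, add_assoc]

lemma rotW_congr (t : List (Finset (AP × ZMod n))) {a b : ℤ} (h : ((a : ZMod n)) = (b : ZMod n)) :
    rotW n t a = rotW n t b := by
  unfold rotW; exact List.map_congr_left fun x _ => rotL_congr x h

lemma rotW_zero (t : List (Finset (AP × ZMod n))) : rotW n t 0 = t := by
  unfold rotW
  simp [rotL_zero]

lemma rotW_add (t : List (Finset (AP × ZMod n))) (a b : ℤ) :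
    rotW n (rotW n t a) b = rotW n t (a + b) := by
  unfold rotW
  rw [List.map_map]
  exact List.map_congr_left fun x _ => rotL_add x a b

/-- choose a representative in `[0,n)` -/
lemma rot_exists [NeZero n] (t : List (Finset (AP × ZMod n))) (a : ℤ) :
    ∃ j : ℕ, j < n ∧ rotW n t ((j : ℤ)) = rotW n t a := by
  have hn : (0:ℤ) < n := by exact_mod_cast (Nat.pos_of_ne_zero (NeZero.ne n))
  refine ⟨(a % n).toNat, ?_, ?_⟩
  · have h1 : a % n < n := Int.emod_lt_of_pos a hn
    omega
  · apply rotW_congr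
    have h0 : (0:ℤ) ≤ a % n := Int.emod_nonneg a (by positivity)
    rw [Int.toNat_of_nonneg h0]
    have : ((a % n : ℤ) : ZMod n) = (a : ZMod n) := by
      rw [ZMod.intCast_eq_intCast_iff]
      exact Int.emod_emod_of_dvd a (dvd_refl _)
    exact this
end Aux1

section Stab1
variable {AP : Type} [DecidableEq AP] {n : ℕ} [NeZero n]

variable {AP : Type} [DecidableEq AP] {n : ℕ} [NeZero n]

def act (k : ZMod n) (x : Finset (AP × ZMod n)) : Finset (AP × ZMod n) :=
  x.image (fun pj => (pj.1, pj.2 + k))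

lemma rotL_eq_act (x : Finset (AP × ZMod n)) (a : ℤ) : rotL n x a = act ((a : ZMod n)) x := rfl

lemma act_zero (x : Finset (AP × ZMod n)) : act (0 : ZMod n) x = x := by
  unfold act; simp

lemma act_act (a b : ZMod n) (x : Finset (AP × ZMod n)) :
    act a (act b x) = act (b + a) x := by
  unfold act
  rw [Finset.image_image]
  apply Finset.image_congr
  intro pj _
  simp [Function.comp, add_assoc]

def stab (x : Finset (AP × ZMod n)) : AddSubgroup (ZMod n) where
  carrier := {k | act k x = x}
  zero_mem' := act_zero x
  add_mem' := by
    intro a b ha hb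
    show act (a + b) x = x
    calc act (a + b) x = act b (act a x) := (act_act b a x).symm
    _ = x := by rw [ha, hb]
  neg_mem' := by
    intro a ha
    show act (-a) x = x
    conv_lhs => rw [← ha]
    rw [act_act, add_neg_cancel, act_zero]

lemma rep_eq_card (x : Finset (AP × ZMod n)) :
    rep n x = (Finset.univ.filter (fun k : ZMod n => act k x = x)).card := by
  unfold rep
  apply Finset.card_bij (fun j _ => ((j : ℕ) : ZMod n))
  · intro j hj
    simp only [Finset.mem_filter, Finset.mem_range] at hj
    simp only [Finset.mem_filter, Finset.mem_univ, true_and]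
    have h2 := hj.2
    rw [rotL_eq_act] at h2
    push_cast at h2
    exact h2
  · intro j1 h1 j2 h2 heq
    simp only [Finset.mem_filter, Finset.mem_range] at h1 h2
    have := congrArg ZMod.val heq
    rwa [ZMod.val_cast_of_lt h1.1, ZMod.val_cast_of_lt h2.1] at this
  · intro k hk
    simp only [Finset.mem_filter, Finset.mem_univ, true_and] at hk
    refine ⟨k.val, ?_, ?_⟩
    · simp only [Finset.mem_filter, Finset.mem_range]
      refine ⟨ZMod.val_lt k, ?_⟩
      rw [rotL_eq_act]
      have : (((k.val : ℕ) : ℤ) : ZMod n) = k := by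
        push_cast
        exact ZMod.natCast_rightInverse k

      rw [this]; exact hk
    · exact ZMod.natCast_rightInverse k

lemma rep_eq_natCard (x : Finset (AP × ZMod n)) : rep n x = Nat.card (stab x) := by
  classical
  have hfil : (Finset.univ.filter (fun k : ZMod n => act k x = x)) =
      (Finset.univ.filter (fun k : ZMod n => k ∈ stab x)) := by
    ext a
    simp only [Finset.mem_filter, Finset.mem_univ, true_and]
    exact Iff.rfl
  rw [rep_eq_card, hfil, ← Fintype.card_subtype, ← Nat.card_eq_fintype_card]

lemma act_nsmul_zero (x : Finset (AP × ZMod n)) {k : ZMod n} (h : act k x = x) :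
    rep n x • k = 0 := by
  have h1 : addOrderOf k ∣ Nat.card (stab x) := AddSubgroup.addOrderOf_dvd_natCard _ h
  rw [← rep_eq_natCard] at h1
  exact addOrderOf_dvd_iff_nsmul_eq_zero.mp h1

lemma nsmul_zero_act (x : Finset (AP × ZMod n)) {k : ZMod n} (h : rep n x • k = 0) :
    act k x = x := by
  classical
  set S := Finset.univ.filter (fun k : ZMod n => act k x = x) with hS
  set T := Finset.univ.filter (fun k : ZMod n => rep n x • k = 0) with hT
  have hST : S ⊆ T := by
    intro a ha
    simp only [hS, hT, Finset.mem_filter, Finset.mem_univ, true_and] at *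
    exact act_nsmul_zero x ha
  have hpos : 0 < rep n x := by
    rw [rep_eq_card]
    apply Finset.card_pos.mpr
    exact ⟨0, by simp [act_zero]⟩
  have hTle : T.card ≤ rep n x := by
    have := IsAddCyclic.card_nsmul_eq_zero_le (α := ZMod n) hpos
    convert this using 2
  have hSc : S.card = rep n x := by rw [hS, ← rep_eq_card]
  have hEq : S = T := Finset.eq_of_subset_of_card_le hST (hTle.trans hSc.ge)
  have hkT : k ∈ T := by
    rw [hT]
    exact Finset.mem_filter.mpr ⟨Finset.mem_univ k, h⟩
  rw [← hEq, hS] at hkT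
  exact (Finset.mem_filter.mp hkT).2


lemma reps_nsmul_zero {k : ZMod n} :
    ∀ (t : List (Finset (AP × ZMod n))) (a : ℕ), a • k = 0 → List.map (act k) t = t →
      (t.foldl (fun a x => Nat.gcd a (rep n x)) a) • k = 0 := by
  intro t
  induction t with
  | nil => intro a ha _; exact ha
  | cons x t ih =>
    intro a ha hmap
    simp only [List.map_cons, List.cons.injEq] at hmap
    have hx : rep n x • k = 0 := act_nsmul_zero x hmap.1
    have hgcd : Nat.gcd a (rep n x) • k = 0 := by
      have d1 : addOrderOf k ∣ a := addOrderOf_dvd_iff_nsmul_eq_zero.mpr ha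
      have d2 : addOrderOf k ∣ rep n x := addOrderOf_dvd_iff_nsmul_eq_zero.mpr hx
      exact addOrderOf_dvd_iff_nsmul_eq_zero.mp (Nat.dvd_gcd d1 d2)
    exact ih _ hgcd hmap.2

lemma min'_congr' {α : Type*} [LinearOrder α] {s t : Finset α} (h : s = t) (hs : s.Nonempty)
    (ht : t.Nonempty) : s.min' hs = t.min' ht := by subst h; rfl

lemma B_subset (t : List (Finset (AP × ZMod n))) (i : ℕ) :
    (Finset.range n).image (fun j : ℕ => rotW n (rotW n t ((i : ℤ))) ((j : ℤ))) ⊆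
      (Finset.range n).image (fun j : ℕ => rotW n t ((j : ℤ))) := by
  intro w hw
  obtain ⟨j, hj, hjw⟩ := Finset.mem_image.mp hw
  rw [Finset.mem_range] at hj
  obtain ⟨j', hj', hj'w⟩ := rot_exists t ((i : ℤ) + (j : ℤ))
  refine Finset.mem_image.mpr ⟨j', Finset.mem_range.mpr hj', ?_⟩
  rw [hj'w, ← rotW_add, hjw]

lemma B_superset (t : List (Finset (AP × ZMod n))) (i : ℕ) :
    (Finset.range n).image (fun j : ℕ => rotW n t ((j : ℤ))) ⊆
      (Finset.range n).image (fun j : ℕ => rotW n (rotW n t ((i : ℤ))) ((j : ℤ))) := by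
  intro w hw
  obtain ⟨j, hj, hjw⟩ := Finset.mem_image.mp hw
  rw [Finset.mem_range] at hj
  obtain ⟨j', hj', hj'w⟩ := rot_exists (rotW n t ((i : ℤ))) ((j : ℤ) - (i : ℤ))
  refine Finset.mem_image.mpr ⟨j', Finset.mem_range.mpr hj', ?_⟩
  rw [hj'w, rotW_add, ← hjw]
  congr 1
  ring

lemma B_rot (t : List (Finset (AP × ZMod n))) (i : ℕ) :
    (Finset.range n).image (fun j : ℕ => rotW n (rotW n t ((i : ℤ))) ((j : ℤ))) =
      (Finset.range n).image (fun j : ℕ => rotW n t ((j : ℤ))) :=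
  Finset.Subset.antisymm (B_subset t i) (B_superset t i)

variable [LinearOrder (Finset (AP × ZMod n))]

lemma eta_rot (t : List (Finset (AP × ZMod n))) (i : ℕ) :
    eta n (rotW n t ((i : ℤ))) = eta n t :=
  min'_congr' (B_rot t i) _ _

lemma eta_mem (t : List (Finset (AP × ZMod n))) :
    ∃ i : ℕ, i < n ∧ rotW n t ((i : ℤ)) = eta n t := by
  have h := Finset.min'_mem
    ((Finset.range n).image (fun i : ℕ => rotW n t ((i : ℤ))))
    ((Finset.nonempty_range_iff.mpr (NeZero.ne n)).image _)
  obtain ⟨i, hi, hiw⟩ := Finset.mem_image.mp h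
  exact ⟨i, Finset.mem_range.mp hi, hiw⟩

lemma leastRotIdx_spec {s t : List (Finset (AP × ZMod n))}
    (h : ∃ i : ℕ, i < n ∧ rotW n s ((i : ℤ)) = t) :
    leastRotIdx n s t < n ∧ rotW n s ((leastRotIdx n s t : ℤ)) = t := by
  unfold leastRotIdx
  rw [dif_pos h]
  exact Nat.find_spec h

end Stab1


/-- If `reps(t) ∣ rep(τ(t))` for every `t`, then the symmetric completion of `τ`
has the symmetry property, and it agrees with `τ` on normalized words. -/
theorem symComp_symmetry
    {AP_I AP_O : Type} [DecidableEq AP_I] [Fintype AP_I] [DecidableEq AP_O] [Fintype AP_O]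
    (n : ℕ) [NeZero n] [LinearOrder (Finset (AP_I × ZMod n))]
    (τ : List (Finset (AP_I × ZMod n)) → Finset (AP_O × ZMod n))
    (hdvd : ∀ t, reps n t ∣ rep n (τ t)) :
    (∀ (t : List (Finset (AP_I × ZMod n))) (i : ℕ), i < n →
        symComp n τ (rotW n t ((i : ℤ))) = rotL n (symComp n τ t) ((i : ℤ))) ∧
    (∀ t : List (Finset (AP_I × ZMod n)), normalized n t → symComp n τ t = τ t) := by
  classical
  -- key transfer lemma: anything fixing a word fixes its output
  have transfer : ∀ (s : List (Finset (AP_I × ZMod n))) (c : ℤ), rotW n s c = s →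
      rotL n (τ s) c = τ s := by
    intro s c hc
    have hmap : List.map (act ((c : ZMod n))) s = s := hc
    have hbase : (n : ℕ) • ((c : ZMod n)) = 0 := by
      rw [nsmul_eq_mul, ZMod.natCast_self, zero_mul]
    have h1 : reps n s • ((c : ZMod n)) = 0 := reps_nsmul_zero s n hbase hmap
    have h2 : rep n (τ s) • ((c : ZMod n)) = 0 := by
      have dord : addOrderOf ((c : ZMod n)) ∣ reps n s :=
        addOrderOf_dvd_iff_nsmul_eq_zero.mpr h1
      exact addOrderOf_dvd_iff_nsmul_eq_zero.mp (dord.trans (hdvd s))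
    rw [rotL_eq_act]
    exact nsmul_zero_act (τ s) h2
  constructor
  · intro t i hi
    obtain ⟨e1, he1⟩ : ∃ j : ℕ, j < n ∧ rotW n (eta n t) ((j : ℤ)) = t := by
      obtain ⟨i0, hi0, h0⟩ := eta_mem (n := n) t
      obtain ⟨j, hj, hjw⟩ := rot_exists (eta n t) (-(i0 : ℤ))
      refine ⟨j, hj, ?_⟩
      rw [hjw, ← h0, rotW_add, add_neg_cancel, rotW_zero]
    have hex1 : ∃ j : ℕ, j < n ∧ rotW n (eta n t) ((j : ℤ)) = t := ⟨e1, he1⟩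
    obtain ⟨hb_lt, hb⟩ := leastRotIdx_spec hex1
    set b := leastRotIdx n (eta n t) t with hbdef
    have hex2 : ∃ j : ℕ, j < n ∧ rotW n (eta n t) ((j : ℤ)) = rotW n t ((i : ℤ)) := by
      obtain ⟨j, hj, hjw⟩ := rot_exists (eta n t) ((b : ℤ) + (i : ℤ))
      refine ⟨j, hj, ?_⟩
      rw [hjw, ← rotW_add, hb]
    have heta : eta n (rotW n t ((i : ℤ))) = eta n t := eta_rot t i
    have hex2' : ∃ j : ℕ, j < n ∧
        rotW n (eta n (rotW n t ((i : ℤ)))) ((j : ℤ)) = rotW n t ((i : ℤ)) := by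
      rw [heta]; exact hex2
    obtain ⟨ha_lt, ha⟩ := leastRotIdx_spec hex2'
    set a := leastRotIdx n (eta n (rotW n t ((i : ℤ)))) (rotW n t ((i : ℤ))) with hadef
    rw [heta] at ha
    -- rotW (eta t) a = rotW t i = rotW (eta t) (b + i)
    have key : rotW n (eta n t) ((a : ℤ)) = rotW n (eta n t) ((b : ℤ) + (i : ℤ)) := by
      rw [← rotW_add, hb, ha]
    have hfix : rotW n (eta n t) ((a : ℤ) - ((b : ℤ) + (i : ℤ))) = eta n t := by
      have := congrArg (fun w => rotW n w (-((b : ℤ) + (i : ℤ)))) key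
      simp only [rotW_add] at this
      rw [add_neg_cancel, rotW_zero] at this
      rw [sub_eq_add_neg]
      exact this
    have hout : rotL n (τ (eta n t)) ((a : ℤ) - ((b : ℤ) + (i : ℤ))) = τ (eta n t) :=
      transfer _ _ hfix
    have hmain : rotL n (τ (eta n t)) ((a : ℤ)) =
        rotL n (τ (eta n t)) ((b : ℤ) + (i : ℤ)) := by
      conv_rhs => rw [← hout]
      rw [rotL_add]
      congr 1
      ring
    show rotL n (τ (eta n (rotW n t ((i : ℤ))))) ((a : ℤ)) =
      rotL n (rotL n (τ (eta n t)) ((b : ℤ))) ((i : ℤ))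
    rw [heta, hmain, rotL_add]
  · intro t ht
    have ht' : eta n t = t := ht
    show rotL n (τ (eta n t)) ((leastRotIdx n (eta n t) t : ℤ)) = τ t
    rw [ht']
    have hex : ∃ i : ℕ, i < n ∧ rotW n t ((i : ℤ)) = t :=
      ⟨0, Nat.pos_of_ne_zero (NeZero.ne n), by rw [Nat.cast_zero, rotW_zero]⟩
    have h0 : leastRotIdx n t t = 0 := by
      unfold leastRotIdx
      rw [dif_pos hex]
      rw [Nat.find_eq_zero]
      exact ⟨Nat.pos_of_ne_zero (NeZero.ne n), by rw [Nat.cast_zero, rotW_zero]⟩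
    rw [h0, Nat.cast_zero, rotL_zero]
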